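/- Let k be an even integer with k ≥ 4 and k ≠ 6 (equivalently, k ≡ 0 (mod 4), or k even with k ≥ 10). Then the packing chromatic number of the generalized Sierpiński graph of the cycle C_k of dimension 2 satisfies χρ(S^2_{C_k}) = 4. -/

import Mathlib

/-!
Write a vertex of `S²(C_k)` as a block `a` and a cell `x` of that block, and measure the cell
relative to the block, `j = x - a (mod k)`: every block is then a `k`-cycle whose cell `j = 1` is
joined to the cell `j = -1` of the next block.

Upper bound: colour the cell `j` of the block `a` by a pattern depending on `j` and on `a mod 4`
(on `a mod 2` when `k ≡ 2 mod 4`), built from the periodic sequence `1, 2, 1, 3` with a sparse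
set of `4`s. The distance is bounded below by an explicit function, capped at `5`, which vanishes
on the diagonal and is `1`-Lipschitz along edges. As colours are at most `4`, only cells of equal,
adjacent or next-but-one blocks have to be compared.

Lower bound: along a block, a packing colouring with colours `1, 2, 3` is a shift of the
sequence `1, 2, 1, 3`. For each of the 16 pairs of shifts on the blocks `0` and `1`, two cells of
equal colour `t` near the edge joining these blocks are at distance at most `t`.
-/

open SimpleGraph

/-- The generalized Sierpiński graph `S^n_G` of a graph `G` on vertex set `[k]`:
vertices are words of length `n` over `[k]`, and distinct words `u`, `v` are adjacent
iff there is an index `i` such that `u j = v j` for `j < i`, `u i v i` is an edge of `G`,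
and `u j = v i`, `v j = u i` for all `j > i`. -/
def sierpinskiGraph {k : ℕ} (G : SimpleGraph (Fin k)) (n : ℕ) :
    SimpleGraph (Fin n → Fin k) where
  Adj u v := ∃ i : Fin n,
      (∀ j, j < i → u j = v j) ∧ G.Adj (u i) (v i) ∧
      (∀ j, i < j → u j = v i ∧ v j = u i)
  symm := by
    constructor
    rintro u v ⟨i, h1, h2, h3⟩
    exact ⟨i, fun j hj => (h1 j hj).symm, h2.symm,
      fun j hj => ⟨(h3 j hj).2, (h3 j hj).1⟩⟩
  loopless := by
    constructor
    rintro u ⟨i, _, h2, _⟩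
    exact G.irrefl h2

/-- `f` is a packing `c`-coloring of `H`: colors lie in `{1, …, c}` and any two distinct
vertices of the same color `t` are at (extended) distance greater than `t`. -/
def IsPackingColoring {V : Type*} (H : SimpleGraph V) (f : V → ℕ) (c : ℕ) : Prop :=
  (∀ v, 1 ≤ f v ∧ f v ≤ c) ∧
    ∀ u v, u ≠ v → f u = f v → (f u : ℕ∞) < H.edist u v

/-- The packing chromatic number of `H`: the least `c` admitting a packing `c`-coloring. -/
noncomputable def packingChromaticNumber {V : Type*} (H : SimpleGraph V) : ℕ :=
  sInf {c | ∃ f : V → ℕ, IsPackingColoring H f c}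

theorem SimpleGraph.Walk.le_add_length {V : Type*} {G : SimpleGraph V} {φ : V → ℕ}
    (hφ : ∀ v w, G.Adj v w → φ w ≤ φ v + 1) {u v : V} (p : G.Walk u v) :
    φ v ≤ φ u + p.length := by
  induction p with
  | nil => simp
  | cons h _ ih =>
    rw [Walk.length_cons]
    have := hφ _ _ h
    omega

theorem SimpleGraph.le_add_edist_of_adj {V : Type*} {G : SimpleGraph V} {φ : V → ℕ}
    (hφ : ∀ v w, G.Adj v w → φ w ≤ φ v + 1) (u v : V) :
    (φ v : ℕ∞) ≤ φ u + G.edist u v := by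
  by_cases hr : G.Reachable u v
  · obtain ⟨p, hp⟩ := hr.exists_walk_length_eq_edist
    rw [← hp]
    exact_mod_cast p.le_add_length hφ
  · simp [edist_eq_top_of_not_reachable hr]

open Fin.CommRing in
theorem Fin.intCast_ne_intCast {k : ℕ} [NeZero k] {i j : ℤ} (hij : i < j) (hjk : j < i + k) :
    (i : Fin k) ≠ j := by
  intro h
  have h' := congrArg Fin.val h
  simp only [Fin.val_intCast] at h'
  have hk : (0 : ℤ) < k := by exact_mod_cast Nat.pos_of_neZero k
  have := Int.emod_nonneg i hk.ne'
  have := Int.emod_nonneg j hk.ne'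
  have := Int.le_of_dvd (by omega) (Int.ModEq.dvd (by omega : i % k = j % k))
  omega

theorem IsPackingColoring.mono {V : Type*} {H : SimpleGraph V} {f : V → ℕ} {c c' : ℕ}
    (hf : IsPackingColoring H f c) (hc : c ≤ c') : IsPackingColoring H f c' :=
  ⟨fun v => ⟨(hf.1 v).1, (hf.1 v).2.trans hc⟩, hf.2⟩

theorem sierpinskiGraph_two_adj {k : ℕ} {G : SimpleGraph (Fin k)} {u v : Fin 2 → Fin k} :
    (sierpinskiGraph G 2).Adj u v ↔
      (u 0 = v 0 ∧ G.Adj (u 1) (v 1)) ∨ (G.Adj (u 0) (v 0) ∧ u 1 = v 0 ∧ v 1 = u 0) := by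
  simp [sierpinskiGraph, Fin.exists_fin_two, Fin.forall_fin_two]
  tauto

namespace SierpinskiCycle

-- Arithmetic modulo `k` on the representatives `0, …, k - 1`, spelled out for `omega`.

def cycSucc (k i : ℕ) : ℕ := if i + 1 = k then 0 else i + 1

def cycSub (k a x : ℕ) : ℕ := if a ≤ x then x - a else x + k - a

def cycDist (k i j : ℕ) : ℕ := min (i - j + (j - i)) (k - (i - j + (j - i)))

variable {k : ℕ}

lemma val_add_one_eq_cycSucc [NeZero k] (a : Fin k) : ((a + 1 : Fin k) : ℕ) = cycSucc k a := by
  obtain ⟨m, rfl⟩ : ∃ m, k = m + 1 := ⟨k - 1, by have := NeZero.pos k; omega⟩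
  rw [Fin.val_add_one, cycSucc]
  split_ifs <;> simp_all [Fin.ext_iff]

lemma cycleGraph_adj_iff_cycSucc (hk : 2 ≤ k) {a b : Fin k} :
    (cycleGraph k).Adj a b ↔ (b : ℕ) = cycSucc k a ∨ (a : ℕ) = cycSucc k b := by
  obtain ⟨m, rfl⟩ : ∃ m, k = m + 2 := ⟨k - 2, by omega⟩
  rw [cycleGraph_adj, sub_eq_iff_eq_add', sub_eq_iff_eq_add', Fin.ext_iff, Fin.ext_iff,
    val_add_one_eq_cycSucc, val_add_one_eq_cycSucc]
  tauto

lemma cycSub_self (a : ℕ) : cycSub k a a = 0 := by simp [cycSub]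

lemma cycSub_lt {a x : ℕ} (ha : a < k) (hx : x < k) : cycSub k a x < k := by
  unfold cycSub; split_ifs <;> omega

lemma cycSub_injective {a x y : ℕ} (ha : a < k) (hx : x < k) (hy : y < k)
    (h : cycSub k a x = cycSub k a y) : x = y := by
  unfold cycSub at h; split_ifs at h <;> omega

lemma cycSub_cycSucc {a x : ℕ} (ha : a < k) (hx : x < k) :
    cycSub k a (cycSucc k x) = cycSucc k (cycSub k a x) := by
  unfold cycSub cycSucc; split_ifs <;> omega

lemma cycSub_cycSucc_self {a : ℕ} (hk : 2 ≤ k) : cycSub k a (cycSucc k a) = 1 := by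
  unfold cycSub cycSucc; split_ifs <;> omega

lemma cycSub_cycSucc_self_left {a : ℕ} (ha : a < k) : cycSub k (cycSucc k a) a = k - 1 := by
  unfold cycSub cycSucc; split_ifs <;> omega

lemma cycDist_comm (i j : ℕ) : cycDist k i j = cycDist k j i := by
  unfold cycDist; omega

lemma eq_or_cycDist_pos {i j : ℕ} (hi : i < k) (hj : j < k) : i = j ∨ 0 < cycDist k i j := by
  unfold cycDist; omega

lemma cycDist_cycSucc_le {i j : ℕ} (hi : i < k) (hj : j < k) :
    cycDist k i (cycSucc k j) ≤ cycDist k i j + 1 := by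
  unfold cycDist cycSucc; split_ifs <;> omega

lemma cycDist_le_cycSucc {i j : ℕ} (hi : i < k) (hj : j < k) :
    cycDist k i j ≤ cycDist k i (cycSucc k j) + 1 := by
  unfold cycDist cycSucc; split_ifs <;> omega

def ruler (j : ℕ) : ℕ := if j % 2 = 0 then 1 else if j % 4 = 1 then 2 else 3

section RulerWindows

variable {s : ℤ → ℕ} (hs : ∀ i, 1 ≤ s i ∧ s i ≤ 3)
  (hsep : ∀ i j, i < j → s i = s j → (s i : ℤ) < j - i)
include hs hsep

/-- If `s i, s (i + 1)` were `3, 2`, no colour would be left for `i + 3`; if they were `2, 3`,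
none would be left for `i - 2`. -/
lemma eq_one_or_succ_eq_one (i : ℤ) : s i = 1 ∨ s (i + 1) = 1 := by
  by_contra! h
  have := hs i; have := hs (i + 1); have := hsep i (i + 1) (by omega)
  rcases (by omega : s i = 3 ∧ s (i + 1) = 2 ∨ s i = 2 ∧ s (i + 1) = 3)
    with ⟨h₀, h₁⟩ | ⟨h₀, h₁⟩
  · have := hs (i + 2); have := hs (i + 3)
    have := hsep (i + 1) (i + 2) (by omega); have := hsep i (i + 2) (by omega)
    have := hsep (i + 2) (i + 3) (by omega); have := hsep (i + 1) (i + 3) (by omega)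
    have := hsep i (i + 3) (by omega)
    omega
  · have := hs (i - 1); have := hs (i - 2)
    have := hsep (i - 1) i (by omega); have := hsep (i - 1) (i + 1) (by omega)
    have := hsep (i - 2) (i - 1) (by omega); have := hsep (i - 2) i (by omega)
    have := hsep (i - 2) (i + 1) (by omega)
    omega

lemma apply_add_two (i : ℤ) : s (i + 2) = if s i = 1 then 1 else 5 - s i := by
  have h₀ := eq_one_or_succ_eq_one hs hsep i
  have h₁ := eq_one_or_succ_eq_one hs hsep (i + 1)
  rw [add_assoc, one_add_one_eq_two] at h₁
  have := hs i; have := hs (i + 2)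
  have := hsep i (i + 1) (by omega); have := hsep (i + 1) (i + 2) (by omega)
  have := hsep i (i + 2) (by omega)
  split_ifs <;> omega

theorem exists_ruler_window (i : ℤ) :
    ∃ φ : Fin 4, ∀ m : Fin 4, s (i + m) = ruler (m + φ) := by
  have h₀ := eq_one_or_succ_eq_one hs hsep i
  have h₂ := apply_add_two hs hsep i
  have h₃ := apply_add_two hs hsep (i + 1)
  rw [add_assoc, show (1 : ℤ) + 2 = 3 by norm_num] at h₃
  have := hs i; have := hs (i + 1); have := hsep i (i + 1) (by omega)
  rcases (by omega : s i = 1 ∧ s (i + 1) = 2 ∨ s i = 2 ∧ s (i + 1) = 1 ∨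
      s i = 1 ∧ s (i + 1) = 3 ∨ s i = 3 ∧ s (i + 1) = 1)
    with ⟨e₀, e₁⟩ | ⟨e₀, e₁⟩ | ⟨e₀, e₁⟩ | ⟨e₀, e₁⟩
  · exact ⟨0, fun m => by fin_cases m <;> simp_all [ruler]⟩
  · exact ⟨1, fun m => by fin_cases m <;> simp_all [ruler]⟩
  · exact ⟨2, fun m => by fin_cases m <;> simp_all [ruler]⟩
  · exact ⟨3, fun m => by fin_cases m <;> simp_all [ruler]⟩

end RulerWindows

-- `m₀` is the cell `m₀` of the block `0` and `m₁` the cell `m₁ - 1` of the block `1`; the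
-- bound is the length of a walk between them through the edge from `(0, 1)` to `(1, 0)`.
lemma ruler_shifts_clash : ∀ φ₀ φ₁ : Fin 4, ∃ m₀ m₁ : Fin 4,
    ruler (m₀ + φ₀) = ruler (m₁ + φ₁) ∧
      ((m₀ : ℤ) - 1).natAbs + 1 + ((m₁ : ℤ) - 1).natAbs ≤ ruler (m₀ + φ₀) := by
  decide

section LowerBound

open Fin.CommRing

lemma adj_add_one_snd (hk : 2 ≤ k) [NeZero k] (a x : Fin k) :
    (sierpinskiGraph (cycleGraph k) 2).Adj ![a, x] ![a, x + 1] :=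
  sierpinskiGraph_two_adj.mpr (Or.inl ⟨rfl, (cycleGraph_adj_iff_cycSucc hk).mpr
    (Or.inl (val_add_one_eq_cycSucc x))⟩)

lemma adj_add_one_swap (hk : 2 ≤ k) [NeZero k] (a : Fin k) :
    (sierpinskiGraph (cycleGraph k) 2).Adj ![a, a + 1] ![a + 1, a] :=
  sierpinskiGraph_two_adj.mpr (Or.inr ⟨(cycleGraph_adj_iff_cycSucc hk).mpr
    (Or.inl (val_add_one_eq_cycSucc a)), rfl, rfl⟩)

lemma edist_add_natCast_le (hk : 2 ≤ k) [NeZero k] (a : Fin k) (i : ℤ) (m : ℕ) :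
    (sierpinskiGraph (cycleGraph k) 2).edist ![a, (i : Fin k)] ![a, ((i + m : ℤ) : Fin k)] ≤
      m := by
  induction m with
  | zero => simp
  | succ m ih =>
    have hadj := adj_add_one_snd hk a ((i + m : ℤ) : Fin k)
    rw [show ((i + m : ℤ) : Fin k) + 1 = ((i + (m + 1 : ℕ) : ℤ) : Fin k) by push_cast; ring]
      at hadj
    calc _ ≤ _ + _ := SimpleGraph.edist_triangle
      _ ≤ (m : ℕ∞) + 1 := add_le_add ih (edist_eq_one_iff_adj.mpr hadj).le
      _ = _ := by push_cast; rfl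

lemma edist_intCast_le (hk : 2 ≤ k) [NeZero k] (a : Fin k) (i j : ℤ) :
    (sierpinskiGraph (cycleGraph k) 2).edist ![a, (i : Fin k)] ![a, (j : Fin k)] ≤
      (i - j).natAbs := by
  rcases le_total i j with h | h
  · obtain ⟨m, hm⟩ := Int.eq_ofNat_of_zero_le (sub_nonneg.mpr h)
    rw [show j = i + m by omega, show (i - (i + m)).natAbs = m by omega]
    exact edist_add_natCast_le hk a i m
  · obtain ⟨m, hm⟩ := Int.eq_ofNat_of_zero_le (sub_nonneg.mpr h)
    rw [edist_comm, show i = j + m by omega, show (j + m - j).natAbs = m by omega]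
    exact edist_add_natCast_le hk a j m

lemma edist_zero_one_le (hk : 2 ≤ k) [NeZero k] (i j : ℤ) :
    (sierpinskiGraph (cycleGraph k) 2).edist ![0, (i : Fin k)] ![1, (j : Fin k)] ≤
      ((i - 1).natAbs + 1 + j.natAbs : ℕ) := by
  have hcross : (sierpinskiGraph (cycleGraph k) 2).Adj ![0, ((1 : ℤ) : Fin k)]
      ![1, ((0 : ℤ) : Fin k)] := by
    simpa using adj_add_one_swap hk 0
  calc _ ≤ _ + _ := SimpleGraph.edist_triangle (v := ![1, ((0 : ℤ) : Fin k)])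
    _ ≤ (_ + _) + _ := by gcongr; exact SimpleGraph.edist_triangle
    _ ≤ ((i - 1).natAbs + 1) + (0 - j).natAbs :=
        add_le_add (add_le_add (edist_intCast_le hk 0 i 1) (edist_eq_one_iff_adj.mpr hcross).le)
          (edist_intCast_le hk 1 0 j)
    _ = _ := by push_cast; simp

lemma lt_sub_of_isPackingColoring (hk : 4 ≤ k) [NeZero k] {f : (Fin 2 → Fin k) → ℕ}
    (hf : IsPackingColoring (sierpinskiGraph (cycleGraph k) 2) f 3) (a : Fin k) (i j : ℤ)
    (hij : i < j) (hc : f ![a, (i : Fin k)] = f ![a, (j : Fin k)]) :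
    (f ![a, (i : Fin k)] : ℤ) < j - i := by
  by_contra! hle
  have h3 := (hf.1 ![a, (i : Fin k)]).2
  have hne : ![a, (i : Fin k)] ≠ ![a, (j : Fin k)] := fun h =>
    Fin.intCast_ne_intCast hij (by omega) (congrFun h 1)
  have := (hf.2 _ _ hne hc).trans_le (edist_intCast_le (by omega) a i j)
  norm_cast at this
  omega

theorem not_isPackingColoring_three (hk : 4 ≤ k) (f : (Fin 2 → Fin k) → ℕ) :
    ¬IsPackingColoring (sierpinskiGraph (cycleGraph k) 2) f 3 := by
  intro hf
  have : NeZero k := ⟨by omega⟩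
  obtain ⟨φ₀, h₀⟩ := exists_ruler_window (s := fun i => f ![0, (i : Fin k)])
    (fun _ => hf.1 _) (lt_sub_of_isPackingColoring hk hf 0) 0
  obtain ⟨φ₁, h₁⟩ := exists_ruler_window (s := fun i => f ![1, (i : Fin k)])
    (fun _ => hf.1 _) (lt_sub_of_isPackingColoring hk hf 1) (-1)
  obtain ⟨m₀, m₁, hcol, hlen⟩ := ruler_shifts_clash φ₀ φ₁
  have h01 : (0 : Fin k) ≠ 1 := by
    simp only [ne_eq, Fin.ext_iff, Fin.coe_ofNat_eq_mod, Nat.zero_mod, Nat.zero_eq_one_mod_iff]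
    omega
  have := (hf.2 _ _ (fun h => h01 (congrFun h 0))
    ((h₀ m₀).trans (hcol.trans (h₁ m₁).symm))).trans_le (edist_zero_one_le (by omega) _ _)
  rw [h₀] at this
  have := ENat.natCast_lt_natCast.mp this
  omega

end LowerBound

/-- A lower bound, capped at `5`, for the distance from the cell `j` of a block to the cell `j'`
of the block `d` steps further on, cells being numbered relative to their blocks. A walk between
different blocks leaves through the cell `1` or `-1`, and crossing a whole intermediate block
costs `3`: one edge between blocks and two steps inside. -/
def distLowerBound (k d j j' : ℕ) : ℕ :=
  min 5 (if d = 0 then cycDist k j j' else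
    min (cycDist k j 1 + (3 * d - 2) + cycDist k (k - 1) j')
      (cycDist k j (k - 1) + (3 * (k - d) - 2) + cycDist k 1 j'))

lemma distLowerBound_self (j : ℕ) : distLowerBound k 0 j j = 0 := by
  simp [distLowerBound, cycDist]

lemma distLowerBound_cycSucc_le {d j₀ j : ℕ} (hk : 4 ≤ k) (hj₀ : j₀ < k) (hj : j < k) :
    distLowerBound k d j₀ (cycSucc k j) ≤ distLowerBound k d j₀ j + 1 := by
  have := cycDist_cycSucc_le hj₀ hj
  have := cycDist_cycSucc_le (i := 1) (by omega) hj
  have := cycDist_cycSucc_le (i := k - 1) (by omega) hj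
  unfold distLowerBound; split_ifs <;> omega

lemma distLowerBound_le_cycSucc {d j₀ j : ℕ} (hk : 4 ≤ k) (hj₀ : j₀ < k) (hj : j < k) :
    distLowerBound k d j₀ j ≤ distLowerBound k d j₀ (cycSucc k j) + 1 := by
  have := cycDist_le_cycSucc hj₀ hj
  have := cycDist_le_cycSucc (i := 1) (by omega) hj
  have := cycDist_le_cycSucc (i := k - 1) (by omega) hj
  unfold distLowerBound; split_ifs <;> omega

lemma distLowerBound_cycSucc_sub_one {d j₀ : ℕ} (hk : 4 ≤ k) (hd : d < k) (hj₀ : j₀ < k) :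
    distLowerBound k (cycSucc k d) j₀ (k - 1) ≤ distLowerBound k d j₀ 1 + 1 ∧
      distLowerBound k d j₀ 1 ≤ distLowerBound k (cycSucc k d) j₀ (k - 1) + 1 := by
  have h₁ : cycDist k (k - 1) (k - 1) = 0 := by unfold cycDist; omega
  have h₂ : cycDist k 1 1 = 0 := by unfold cycDist; omega
  have h₃ : cycDist k (k - 1) 1 = 2 := by unfold cycDist; omega
  have h₄ : cycDist k 1 (k - 1) = 2 := by unfold cycDist; omega
  have h₅ : cycDist k j₀ 1 ≤ cycDist k j₀ (k - 1) + 2 ∧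
      cycDist k j₀ (k - 1) ≤ cycDist k j₀ 1 + 2 := by
    unfold cycDist; omega
  unfold distLowerBound cycSucc
  rw [h₁, h₂, h₃, h₄]
  simp only [min_def]
  split_ifs <;> first | contradiction | omega

lemma distLowerBound_zero (j j' : ℕ) : distLowerBound k 0 j j' = min 5 (cycDist k j j') := by
  simp [distLowerBound]

lemma distLowerBound_one (hk : 4 ≤ k) (j j' : ℕ) :
    distLowerBound k 1 j j' = min 5 (cycDist k j 1 + 1 + cycDist k (k - 1) j') := by
  unfold distLowerBound; simp only [one_ne_zero, if_false]; omega

lemma distLowerBound_sub_one (hk : 4 ≤ k) (j j' : ℕ) :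
    distLowerBound k (k - 1) j j' = min 5 (cycDist k j (k - 1) + 1 + cycDist k 1 j') := by
  unfold distLowerBound; simp only [if_neg (by omega : k - 1 ≠ 0)]; omega

lemma distLowerBound_of_two_le {d j j' : ℕ} (hk : 4 ≤ k) (hj : j < k) (hj' : j' < k)
    (h₂ : 2 ≤ d) (hd : d ≤ k - 2) :
    4 ≤ distLowerBound k d j j' ∧ (5 ≤ distLowerBound k d j j' ∨
      d = 2 ∧ j = 1 ∧ j' = k - 1 ∨ d = k - 2 ∧ j = k - 1 ∧ j' = 1) := by
  have := eq_or_cycDist_pos hj (by omega : 1 < k)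
  have := eq_or_cycDist_pos hj (by omega : k - 1 < k)
  have := eq_or_cycDist_pos (by omega : k - 1 < k) hj'
  have := eq_or_cycDist_pos (by omega : 1 < k) hj'
  unfold distLowerBound; simp only [if_neg (by omega : d ≠ 0)]; omega

def potential (u v : Fin 2 → Fin k) : ℕ :=
  distLowerBound k (cycSub k (u 0) (v 0)) (cycSub k (u 0) (u 1)) (cycSub k (v 0) (v 1))

lemma potential_le_of_adj (hk : 4 ≤ k) (u : Fin 2 → Fin k) {v w : Fin 2 → Fin k}
    (h : (sierpinskiGraph (cycleGraph k) 2).Adj v w) : potential u w ≤ potential u v + 1 := by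
  have hj₀ := cycSub_lt (u 0).isLt (u 1).isLt
  simp only [sierpinskiGraph_two_adj, cycleGraph_adj_iff_cycSucc (by omega : 2 ≤ k)] at h
  unfold potential
  rcases h with ⟨h0, h1 | h1⟩ | ⟨h0 | h0, h1, h2⟩
  · rw [← h0, h1, cycSub_cycSucc (v 0).isLt (v 1).isLt]
    exact distLowerBound_cycSucc_le hk hj₀ (cycSub_lt (v 0).isLt (v 1).isLt)
  · rw [← h0, h1, cycSub_cycSucc (v 0).isLt (w 1).isLt]
    exact distLowerBound_le_cycSucc hk hj₀ (cycSub_lt (v 0).isLt (w 1).isLt)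
  · rw [h1, h2, h0, cycSub_cycSucc (u 0).isLt (v 0).isLt, cycSub_cycSucc_self (by omega),
      cycSub_cycSucc_self_left (v 0).isLt]
    exact (distLowerBound_cycSucc_sub_one hk (cycSub_lt (u 0).isLt (v 0).isLt) hj₀).1
  · rw [h1, h2, h0, cycSub_cycSucc (u 0).isLt (w 0).isLt, cycSub_cycSucc_self (by omega),
      cycSub_cycSucc_self_left (w 0).isLt]
    exact (distLowerBound_cycSucc_sub_one hk (cycSub_lt (u 0).isLt (w 0).isLt) hj₀).2

theorem potential_le_edist (hk : 4 ≤ k) (u v : Fin 2 → Fin k) :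
    (potential u v : ℕ∞) ≤ (sierpinskiGraph (cycleGraph k) 2).edist u v := by
  have h₀ : potential u u = 0 := by rw [potential, cycSub_self, distLowerBound_self]
  simpa [h₀] using le_add_edist_of_adj (fun _ _ h => potential_le_of_adj hk u h) u v

def blockColoring (p : ℕ → ℕ → ℕ) (u : Fin 2 → Fin k) : ℕ :=
  p (u 0) (cycSub k (u 0) (u 1))

def IsBlockPacking (k : ℕ) (p : ℕ → ℕ → ℕ) : Prop :=
  ∀ a < k, ∀ b < k, ∀ j < k, ∀ j' < k, (a = b → j ≠ j') → p a j = p b j' →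
    p a j < distLowerBound k (cycSub k a b) j j'

theorem isPackingColoring_blockColoring (hk : 4 ≤ k) {p : ℕ → ℕ → ℕ} {c : ℕ}
    (hp : ∀ a < k, ∀ j < k, 1 ≤ p a j ∧ p a j ≤ c) (hsep : IsBlockPacking k p) :
    IsPackingColoring (sierpinskiGraph (cycleGraph k) 2) (blockColoring p) c := by
  refine ⟨fun v => hp _ (v 0).isLt _ (cycSub_lt (v 0).isLt (v 1).isLt), fun u v huv hcol => ?_⟩
  refine lt_of_lt_of_le ?_ (potential_le_edist hk u v)
  have hne : (u 0 : ℕ) = v 0 → cycSub k (u 0) (u 1) ≠ cycSub k (v 0) (v 1) := by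
    intro h0 h1
    rw [h0] at h1
    refine huv (funext fun i => ?_)
    fin_cases i
    · exact Fin.ext h0
    · exact Fin.ext (cycSub_injective (v 0).isLt (u 1).isLt (v 1).isLt h1)
  exact_mod_cast hsep _ (u 0).isLt _ (v 0).isLt _ (cycSub_lt (u 0).isLt (u 1).isLt) _
    (cycSub_lt (v 0).isLt (v 1).isLt) hne hcol

lemma periodic_add_cycSub {p : ℕ → ℕ → ℕ} {q : ℕ} (hper : Function.Periodic p q)
    (hq : q ∣ k) {a b : ℕ} (ha : a < k) (hb : b < k) (e : ℕ) :
    p (b + e) = p (a + cycSub k a b + e) := by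
  obtain ⟨m, rfl⟩ := hq
  have : p (b + e + q * m) = p (b + e) := by simpa [mul_comm] using hper.nat_mul m (b + e)
  generalize q * m = k at *
  unfold cycSub; split_ifs
  · congr 1; omega
  · rw [← this]; congr 1; omega

theorem isBlockPacking_of_periodic (hk : 4 ≤ k) {q : ℕ} (hq : q ∣ k) {p : ℕ → ℕ → ℕ}
    (hper : Function.Periodic p q) (hle : ∀ a, ∀ j < k, p a j ≤ 4)
    (hsame : ∀ a, ∀ j < k, ∀ j' < k, j ≠ j' → p a j = p a j' → p a j < cycDist k j j')
    (hnext : ∀ a, ∀ j < k, ∀ j' < k, p a j = p (a + 1) j' →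
      p a j < cycDist k j 1 + 1 + cycDist k (k - 1) j')
    (hfour : ∀ a, ¬(p a 1 = 4 ∧ p (a + 2) (k - 1) = 4)) :
    IsBlockPacking k p := by
  intro a ha b hb j hj j' hj' hne hcol
  have hshift := periodic_add_cycSub hper hq ha hb
  have hab : cycSub k a b = 0 → a = b := by unfold cycSub; split_ifs <;> omega
  have hd := cycSub_lt (k := k) ha hb
  have hpk : ∀ x, p (x + k) = p x := fun x => by
    obtain ⟨m, rfl⟩ := hq; rw [mul_comm]; exact hper.nat_mul m x
  have := hle a j hj
  generalize cycSub k a b = d at hd hab hshift ⊢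
  rcases (by omega : d = 0 ∨ d = 1 ∨ d = k - 1 ∨ 2 ≤ d ∧ d ≤ k - 2)
    with rfl | rfl | rfl | ⟨h₂, hd₂⟩
  · obtain rfl := hab rfl
    have := hsame a j hj j' hj' (hne rfl) hcol
    rw [distLowerBound_zero]; omega
  · rw [← add_zero b, hshift 0, add_zero] at hcol
    have := hnext a j hj j' hj' hcol
    rw [distLowerBound_one hk]; omega
  · have e : p (b + 1) = p a := by rw [hshift 1, show a + (k - 1) + 1 = a + k by omega, hpk]
    have := hnext b j' hj' j hj (by rw [e]; exact hcol.symm)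
    rw [distLowerBound_sub_one hk, cycDist_comm j, cycDist_comm 1]; omega
  · have e₁ : p (a + d) = p b := by simpa using (hshift 0).symm
    have e₂ : p (b + (k - d)) = p a := by
      rw [hshift, show a + d + (k - d) = a + k by omega, hpk]
    obtain ⟨h4, h5 | ⟨rfl, rfl, rfl⟩ | ⟨hd, rfl, rfl⟩⟩ :=
      distLowerBound_of_two_le hk hj hj' h₂ hd₂
    · omega
    · by_contra! h
      exact hfour a ⟨by omega, by rw [e₁, ← hcol]; omega⟩
    · by_contra! h
      rw [show k - d = 2 by omega] at e₂
      exact hfour b ⟨by rw [← hcol]; omega, by rw [e₂]; omega⟩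

def rulerPattern (a j : ℕ) : ℕ := if a % 2 = 1 ∧ j = 0 then 4 else ruler (j + a % 4)

lemma rulerPattern_mem (a j : ℕ) : 1 ≤ rulerPattern a j ∧ rulerPattern a j ≤ 4 := by
  simp only [rulerPattern, ruler]; split_ifs <;> omega

lemma rulerPattern_same (hk4 : 4 ∣ k) (a : ℕ) : ∀ j < k, ∀ j' < k, j ≠ j' →
    rulerPattern a j = rulerPattern a j' → rulerPattern a j < cycDist k j j' := by
  intros
  simp only [rulerPattern, ruler, cycDist] at *
  split_ifs at * <;> omega

lemma rulerPattern_next (hk : 4 ≤ k) (hk4 : 4 ∣ k) (a : ℕ) : ∀ j < k, ∀ j' < k,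
    rulerPattern a j = rulerPattern (a + 1) j' →
      rulerPattern a j < cycDist k j 1 + 1 + cycDist k (k - 1) j' := by
  intro j hj j' hj' h
  have hr : a % 4 < 4 := Nat.mod_lt _ (by norm_num)
  have e₁ : a % 2 = a % 4 % 2 := by omega
  have e₂ : (a + 1) % 2 = (a % 4 + 1) % 2 := by omega
  have e₃ : (a + 1) % 4 = (a % 4 + 1) % 4 := by omega
  simp only [rulerPattern, e₁, e₂, e₃] at h ⊢
  generalize a % 4 = r at *
  interval_cases r <;>
    simp only [ruler, cycDist, Nat.reduceMod, Nat.reduceAdd, Nat.reduceEqDiff, false_and,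
      true_and, if_false] at h ⊢ <;>
    split_ifs at h ⊢ <;> omega

theorem isBlockPacking_rulerPattern (hk : 4 ≤ k) (hk4 : 4 ∣ k) :
    IsBlockPacking k rulerPattern := by
  refine isBlockPacking_of_periodic hk hk4 (fun a => ?_) (fun a j _ => (rulerPattern_mem a j).2)
    (rulerPattern_same hk4) (rulerPattern_next hk hk4) fun a ⟨h, _⟩ => ?_
  · funext j
    simp only [rulerPattern, show (a + 4) % 2 = a % 2 by omega, Nat.add_mod_right]
  · simp only [rulerPattern, ruler, one_ne_zero, and_false, if_false] at h
    split_ifs at h <;> omega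

def parityPattern (k a j : ℕ) : ℕ :=
  if a % 2 = 0 then
    (if j = k - 5 then 4 else if j = k - 3 then 2 else if j = k - 1 then 3 else ruler j)
  else if j = 0 then 4 else ruler (j + 3)

lemma parityPattern_mem (a j : ℕ) : 1 ≤ parityPattern k a j ∧ parityPattern k a j ≤ 4 := by
  simp only [parityPattern, ruler]; split_ifs <;> omega

lemma parityPattern_same (hk : 10 ≤ k) (hk4 : k % 4 = 2) (a : ℕ) :
    ∀ j < k, ∀ j' < k, j ≠ j' → parityPattern k a j = parityPattern k a j' →
      parityPattern k a j < cycDist k j j' := by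
  intro j hj j' hj' hne h
  rcases Nat.mod_two_eq_zero_or_one a with ha | ha <;>
    simp only [parityPattern, ha, ruler, cycDist, if_true, if_false, one_ne_zero] at h ⊢ <;>
    split_ifs at h ⊢ <;> omega

lemma parityPattern_next (hk : 10 ≤ k) (hk4 : k % 4 = 2) (a : ℕ) :
    ∀ j < k, ∀ j' < k, parityPattern k a j = parityPattern k (a + 1) j' →
      parityPattern k a j < cycDist k j 1 + 1 + cycDist k (k - 1) j' := by
  intro j hj j' hj' h
  obtain ⟨ha, ha'⟩ | ⟨ha, ha'⟩ :
      a % 2 = 0 ∧ (a + 1) % 2 = 1 ∨ a % 2 = 1 ∧ (a + 1) % 2 = 0 := by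
    omega
  all_goals
    simp only [parityPattern, ha, ha', ruler, cycDist, if_true, if_false, one_ne_zero] at h ⊢
    split_ifs at h ⊢ <;> omega

theorem isBlockPacking_parityPattern (hk : 10 ≤ k) (hk4 : k % 4 = 2) :
    IsBlockPacking k (parityPattern k) := by
  refine isBlockPacking_of_periodic (by omega) (Nat.dvd_of_mod_eq_zero (by omega : k % 2 = 0))
    (fun a => ?_) (fun a j _ => (parityPattern_mem a j).2) (parityPattern_same hk hk4)
    (parityPattern_next hk hk4) fun a => ?_
  · funext j
    simp only [parityPattern, Nat.add_mod_right]
  · simp only [parityPattern, ruler]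
    split_ifs <;> omega

theorem exists_isPackingColoring_four (hk : 4 ≤ k) (hke : Even k) (hk6 : k ≠ 6) :
    ∃ f, IsPackingColoring (sierpinskiGraph (cycleGraph k) 2) f 4 := by
  rcases (by obtain ⟨m, rfl⟩ := hke; omega : 4 ∣ k ∨ 10 ≤ k ∧ k % 4 = 2)
    with h | ⟨h₁, h₂⟩
  · exact ⟨_, isPackingColoring_blockColoring hk (fun a _ j _ => rulerPattern_mem a j)
      (isBlockPacking_rulerPattern hk h)⟩
  · exact ⟨_, isPackingColoring_blockColoring hk (fun a _ j _ => parityPattern_mem a j)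
      (isBlockPacking_parityPattern h₁ h₂)⟩

end SierpinskiCycle

open SierpinskiCycle in
theorem stmt7 (k : ℕ) (hk : 4 ≤ k) (hkeven : Even k) (hk6 : k ≠ 6) :
    packingChromaticNumber (sierpinskiGraph (SimpleGraph.cycleGraph k) 2) = 4 := by
  obtain ⟨f, hf⟩ := exists_isPackingColoring_four hk hkeven hk6
  refine le_antisymm (Nat.sInf_le ⟨f, hf⟩) (le_csInf ⟨4, f, hf⟩ ?_)
  rintro c ⟨g, hg⟩
  by_contra! hc
  exact not_isPackingColoring_three hk g (hg.mono (by omega))
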